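/- arXiv:2006.06992 — 2 statements merged into one kernel-verified Lean document; each statement's English description precedes it below -/
import Mathlib

section
/- Fix real numbers t0 < t1 and 0 ≤ x_min < x_max. Let ψ : [t0,t1] × [x_min,x_max] → ℝ be C³ and satisfy ∂_t ψ(t,x) + ∂_x ψ(t,x) = 0 for all (t,x), with boundary values ψ(t, x_min) = u(t) and ψ(t, x_max) = 0 for all t ∈ [t0,t1], where u is C². Define y(t) = ∫_{x_min}^{x_max} x³ ψ(t,x) dx. Then y is three times differentiable on [t0,t1] and y‴(t) = 6 ∫_{x_min}^{x_max} ψ(t,x) dx + 6 x_min u(t) + 3 x_min² u′(t) + x_min³ u″(t) for all t ∈ [t0,t1]. -/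
/-!
Write `M j t = ∫ x in xmin..xmax, x ^ j * ψ t x`. Differentiating under the integral sign,
replacing `∂ₜψ` by `-∂ₓψ` and integrating by parts in `x` gives
`M (k + 1)' = (k + 1) M k + xmin ^ (k + 1) ψ(·, xmin) - xmax ^ (k + 1) ψ(·, xmax)`.
With `ψ(·, xmax) = 0` and `ψ(·, xmin) = u`, applying this to `M 3`, `M 2`, `M 1` in turn
gives `y'''`.
Differentiation under the integral sign on the closed rectangle is done at interior times by
dominated convergence, and extends to the endpoints because the derivative extends continuously.
-/

set_option autoImplicit false

open Set Filter Topology Function MeasureTheory intervalIntegral Interval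

section

variable {E : Type*} [NormedAddCommGroup E] [NormedSpace ℝ E] {a b : ℝ}

theorem hasDerivWithinAt_Icc_of_forall_mem_Ioo {f g : ℝ → E} (hab : a < b)
    (hf : ContinuousOn f (Icc a b)) (hg : ContinuousOn g (Icc a b))
    (hd : ∀ t ∈ Ioo a b, HasDerivAt f (g t) t) {t : ℝ} (ht : t ∈ Icc a b) :
    HasDerivWithinAt f (g t) (Icc a b) t := by
  have hfd : DifferentiableOn ℝ f (Ioo a b) := fun s hs =>
    (hd s hs).differentiableAt.differentiableWithinAt
  have hlim : ∀ l, l ≤ 𝓝[Ioo a b] t → Tendsto (deriv f) l (𝓝 (g t)) := fun l hl =>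
    (((hg t ht).mono Ioo_subset_Icc_self).congr' (eventually_mem_nhdsWithin.mono
      fun s hs => (hd s hs).deriv.symm)).mono_left hl
  obtain rfl | hat := ht.1.eq_or_lt
  · exact (hasDerivWithinAt_Ici_of_tendsto_deriv hfd ((hf _ ht).mono Ioo_subset_Icc_self)
      (Ioo_mem_nhdsGT hab) (hlim _ (nhdsWithin_Ioo_eq_nhdsGT hab).ge)).mono Icc_subset_Ici_self
  obtain rfl | htb := ht.2.eq_or_lt
  · exact (hasDerivWithinAt_Iic_of_tendsto_deriv hfd ((hf _ ht).mono Ioo_subset_Icc_self)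
      (Ioo_mem_nhdsLT hab) (hlim _ (nhdsWithin_Ioo_eq_nhdsLT hab).ge)).mono Icc_subset_Iic_self
  · exact (hd _ ⟨hat, htb⟩).hasDerivWithinAt

theorem continuousOn_intervalIntegral_of_continuousOn_prod {c d : ℝ} (hab : a ≤ b)
    (hcd : c ≤ d) {F : ℝ → ℝ → E} (hF : ContinuousOn (uncurry F) (Icc a b ×ˢ Icc c d)) :
    ContinuousOn (fun s => ∫ x in c..d, F s x) (Icc a b) := by
  have hG : Continuous fun p : ℝ × ℝ => F (projIcc a b hab p.1) (projIcc c d hcd p.2) :=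
    hF.comp_continuous (show Continuous fun p : ℝ × ℝ =>
        ((projIcc a b hab p.1 : ℝ), (projIcc c d hcd p.2 : ℝ)) by fun_prop)
      fun p => ⟨(projIcc a b hab p.1).2, (projIcc c d hcd p.2).2⟩
  refine (continuous_parametric_intervalIntegral_of_continuous' (μ := volume)
    (f := fun s x => F (projIcc a b hab s) (projIcc c d hcd x)) hG c d).continuousOn.congr
    fun s hs => integral_congr fun x hx => ?_
  rw [uIcc_of_le hcd] at hx
  simp only [projIcc_of_mem _ hs, projIcc_of_mem _ hx]

theorem hasDerivWithinAt_intervalIntegral_of_continuousOn_prod [CompleteSpace E] {c d : ℝ}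
    (hab : a < b) (hcd : c ≤ d) {F F' : ℝ → ℝ → E}
    (hF : ContinuousOn (uncurry F) (Icc a b ×ˢ Icc c d))
    (hF' : ContinuousOn (uncurry F') (Icc a b ×ˢ Icc c d))
    (hderiv : ∀ s ∈ Icc a b, ∀ x ∈ Icc c d, HasDerivWithinAt (F · x) (F' s x) (Icc a b) s)
    {t : ℝ} (ht : t ∈ Icc a b) :
    HasDerivWithinAt (fun s => ∫ x in c..d, F s x) (∫ x in c..d, F' t x) (Icc a b) t := by
  refine hasDerivWithinAt_Icc_of_forall_mem_Ioo hab
    (continuousOn_intervalIntegral_of_continuousOn_prod hab.le hcd hF)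
    (continuousOn_intervalIntegral_of_continuousOn_prod hab.le hcd hF') (fun t ht => ?_) ht
  have hslice : ∀ {G : ℝ → ℝ → E}, ContinuousOn (uncurry G) (Icc a b ×ˢ Icc c d) →
      ∀ s ∈ Ioo a b, ContinuousOn (G s) (Icc c d) := fun hG s hs =>
    hG.comp (Continuous.prodMk_right s).continuousOn fun _ hx => ⟨Ioo_subset_Icc_self hs, hx⟩
  have hmeas : ∀ {G : ℝ → ℝ → E}, ContinuousOn (uncurry G) (Icc a b ×ˢ Icc c d) →
      ∀ s ∈ Ioo a b, AEStronglyMeasurable (G s) (volume.restrict (Ι c d)) := by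
    intro G hG s hs
    rw [uIoc_of_le hcd]
    exact ((hslice hG s hs).mono Ioc_subset_Icc_self).aestronglyMeasurable measurableSet_Ioc
  have hmem : ∀ x ∈ Ι c d, x ∈ Icc c d := fun x hx =>
    Ioc_subset_Icc_self (uIoc_of_le hcd ▸ hx)
  obtain ⟨C, hC⟩ := (isCompact_Icc.prod isCompact_Icc).exists_bound_of_continuousOn hF'
  refine (hasDerivAt_integral_of_dominated_loc_of_deriv_le (bound := fun _ => C)
    (Ioo_mem_nhds ht.1 ht.2) ?_ ((hslice hF t ht).intervalIntegrable_of_Icc hcd)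
    (hmeas hF' t ht) ?_ intervalIntegrable_const ?_).2
  · filter_upwards [Ioo_mem_nhds ht.1 ht.2] with s hs using hmeas hF s hs
  · exact .of_forall fun x hx s hs => hC (s, x) ⟨Ioo_subset_Icc_self hs, hmem x hx⟩
  · exact .of_forall fun x hx s hs =>
      (hderiv s (Ioo_subset_Icc_self hs) x (hmem x hx)).hasDerivAt (Icc_mem_nhds hs.1 hs.2)

theorem HasFDerivWithinAt.hasDerivWithinAt_partial_fst {f : ℝ → ℝ → E}
    {f' : ℝ × ℝ →L[ℝ] E} {s t : Set ℝ} {x y : ℝ}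
    (hf : HasFDerivWithinAt (uncurry f) f' (s ×ˢ t) (x, y)) (hy : y ∈ t) :
    HasDerivWithinAt (f · y) (f' (1, 0)) s x :=
  (hf.comp_hasDerivWithinAt x ((hasDerivAt_id' x).prodMk (hasDerivAt_const x y)).hasDerivWithinAt
    fun _ hx => mk_mem_prod hx hy :)

theorem HasFDerivWithinAt.hasDerivWithinAt_partial_snd {f : ℝ → ℝ → E}
    {f' : ℝ × ℝ →L[ℝ] E} {s t : Set ℝ} {x y : ℝ}
    (hf : HasFDerivWithinAt (uncurry f) f' (s ×ˢ t) (x, y)) (hx : x ∈ s) :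
    HasDerivWithinAt (f x) (f' (0, 1)) t y :=
  (hf.comp_hasDerivWithinAt y ((hasDerivAt_const y x).prodMk (hasDerivAt_id' y)).hasDerivWithinAt
    fun _ hy => mk_mem_prod hx hy :)

end

theorem integral_pow_succ_mul_deriv {c d : ℝ} (k : ℕ) {v v' : ℝ → ℝ}
    (hv : ∀ x ∈ [[c, d]], HasDerivWithinAt v (v' x) [[c, d]] x)
    (hv' : IntervalIntegrable v' volume c d) :
    ∫ x in c..d, x ^ (k + 1) * v' x =
      d ^ (k + 1) * v d - c ^ (k + 1) * v c - (k + 1) * ∫ x in c..d, x ^ k * v x := by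
  rw [integral_mul_deriv_eq_deriv_mul_of_hasDerivWithinAt
    (fun x _ => (hasDerivAt_pow (k + 1) x).hasDerivWithinAt) hv
    ((by fun_prop : Continuous _).intervalIntegrable _ _) hv',
    ← intervalIntegral.integral_const_mul]
  simp only [Nat.add_sub_cancel, Nat.cast_succ, mul_assoc]

section Transport

variable {t0 t1 xmin xmax : ℝ} {ψ ψx : ℝ → ℝ → ℝ}

theorem exists_partial_deriv_of_transport (ht : t0 < t1) (hx : xmin < xmax)
    (hC : ContDiffOn ℝ 1 (uncurry ψ) (Icc t0 t1 ×ˢ Icc xmin xmax))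
    (hPDE : ∀ t ∈ Icc t0 t1, ∀ x ∈ Icc xmin xmax,
      derivWithin (fun s => ψ s x) (Icc t0 t1) t
        + derivWithin (fun ξ => ψ t ξ) (Icc xmin xmax) x = 0) :
    ∃ ψx : ℝ → ℝ → ℝ, ContinuousOn (uncurry ψx) (Icc t0 t1 ×ˢ Icc xmin xmax) ∧
      (∀ s ∈ Icc t0 t1, ∀ x ∈ Icc xmin xmax,
        HasDerivWithinAt (ψ · x) (-ψx s x) (Icc t0 t1) s) ∧
      (∀ s ∈ Icc t0 t1, ∀ x ∈ Icc xmin xmax,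
        HasDerivWithinAt (ψ s) (ψx s x) (Icc xmin xmax) x) := by
  set D := fderivWithin ℝ (uncurry ψ) (Icc t0 t1 ×ˢ Icc xmin xmax)
  have hD : ∀ s ∈ Icc t0 t1, ∀ y ∈ Icc xmin xmax,
      HasFDerivWithinAt (uncurry ψ) (D (s, y)) (Icc t0 t1 ×ˢ Icc xmin xmax) (s, y) :=
    fun s hs y hy => (hC.differentiableOn one_ne_zero (s, y) ⟨hs, hy⟩).hasFDerivWithinAt
  refine ⟨fun s y => D (s, y) (0, 1), ?_, fun s hs y hy => ?_,
    fun s hs y hy => (hD s hs y hy).hasDerivWithinAt_partial_snd hs⟩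
  · exact (hC.continuousOn_fderivWithin ((uniqueDiffOn_Icc ht).prod (uniqueDiffOn_Icc hx))
      le_rfl).clm_apply continuousOn_const
  · have hdt := (hD s hs y hy).hasDerivWithinAt_partial_fst hy
    have hdx := (hD s hs y hy).hasDerivWithinAt_partial_snd hs
    have hsum := hPDE s hs y hy
    rw [hdt.derivWithin (uniqueDiffOn_Icc ht s hs), hdx.derivWithin (uniqueDiffOn_Icc hx y hy)]
      at hsum
    rwa [← eq_neg_of_add_eq_zero_left hsum]

theorem hasDerivWithinAt_moment_of_transport (ht : t0 < t1) (hx : xmin ≤ xmax)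
    (hψ : ContinuousOn (uncurry ψ) (Icc t0 t1 ×ˢ Icc xmin xmax))
    (hψx : ContinuousOn (uncurry ψx) (Icc t0 t1 ×ˢ Icc xmin xmax))
    (hdt : ∀ s ∈ Icc t0 t1, ∀ x ∈ Icc xmin xmax,
      HasDerivWithinAt (ψ · x) (-ψx s x) (Icc t0 t1) s)
    (hdx : ∀ s ∈ Icc t0 t1, ∀ x ∈ Icc xmin xmax,
      HasDerivWithinAt (ψ s) (ψx s x) (Icc xmin xmax) x)
    (k : ℕ) {t : ℝ} (htI : t ∈ Icc t0 t1) :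
    HasDerivWithinAt (fun s => ∫ x in xmin..xmax, x ^ (k + 1) * ψ s x)
      ((k + 1) * (∫ x in xmin..xmax, x ^ k * ψ t x)
        + xmin ^ (k + 1) * ψ t xmin - xmax ^ (k + 1) * ψ t xmax) (Icc t0 t1) t := by
  have hslice : ContinuousOn (ψx t) (Icc xmin xmax) :=
    hψx.comp (Continuous.prodMk_right t).continuousOn fun _ hx => ⟨htI, hx⟩
  refine (hasDerivWithinAt_intervalIntegral_of_continuousOn_prod ht hx
    (F := fun s x => x ^ (k + 1) * ψ s x) (F' := fun s x => -(x ^ (k + 1) * ψx s x))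
    ((continuous_snd.pow (k + 1)).continuousOn.mul hψ)
    ((continuous_snd.pow (k + 1)).continuousOn.mul hψx).neg
    (fun s hs x hx => by simpa using (hdt s hs x hx).const_mul (x ^ (k + 1))) htI
    ).congr_deriv ?_
  rw [intervalIntegral.integral_neg, integral_pow_succ_mul_deriv k (uIcc_of_le hx ▸ hdx t htI)
    (hslice.intervalIntegrable_of_Icc hx)]
  ring

end Transport

theorem stmt7_general (t0 t1 xmin xmax : ℝ) (ht : t0 < t1) (hx : xmin < xmax)
    (ψ : ℝ → ℝ → ℝ) (u : ℝ → ℝ)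
    (hC : ContDiffOn ℝ 3 (fun p : ℝ × ℝ => ψ p.1 p.2) (Set.Icc t0 t1 ×ˢ Set.Icc xmin xmax))
    (hu : ContDiffOn ℝ 2 u (Set.Icc t0 t1))
    (hPDE : ∀ t ∈ Set.Icc t0 t1, ∀ x ∈ Set.Icc xmin xmax,
      derivWithin (fun s => ψ s x) (Set.Icc t0 t1) t
        + derivWithin (fun ξ => ψ t ξ) (Set.Icc xmin xmax) x = 0)
    (hbmin : ∀ t ∈ Set.Icc t0 t1, ψ t xmin = u t)
    (hbmax : ∀ t ∈ Set.Icc t0 t1, ψ t xmax = 0) :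
    ∃ y1 y2 : ℝ → ℝ,
      (∀ t ∈ Set.Icc t0 t1,
        HasDerivWithinAt (fun s => ∫ x in xmin..xmax, x ^ 3 * ψ s x) (y1 t)
          (Set.Icc t0 t1) t) ∧
      (∀ t ∈ Set.Icc t0 t1, HasDerivWithinAt y1 (y2 t) (Set.Icc t0 t1) t) ∧
      (∀ t ∈ Set.Icc t0 t1,
        HasDerivWithinAt y2
          ((6 * ∫ x in xmin..xmax, ψ t x) + 6 * xmin * u t
            + 3 * xmin ^ 2 * derivWithin u (Set.Icc t0 t1) t
            + xmin ^ 3 * derivWithin (derivWithin u (Set.Icc t0 t1)) (Set.Icc t0 t1) t)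
          (Set.Icc t0 t1) t) := by
  obtain ⟨ψx, hψx, hdt, hdx⟩ :=
    exists_partial_deriv_of_transport ht hx (hC.of_le (by norm_num)) hPDE
  have hM (k : ℕ) {t : ℝ} (htI : t ∈ Icc t0 t1) :
      HasDerivWithinAt (fun s => ∫ x in xmin..xmax, x ^ (k + 1) * ψ s x)
        ((k + 1) * (∫ x in xmin..xmax, x ^ k * ψ t x) + xmin ^ (k + 1) * u t) (Icc t0 t1) t := by
    simpa [hbmin t htI, hbmax t htI] using
      hasDerivWithinAt_moment_of_transport ht hx.le hC.continuousOn hψx hdt hdx k htI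
  have hu' {t : ℝ} (htI : t ∈ Icc t0 t1) :
      HasDerivWithinAt u (derivWithin u (Icc t0 t1) t) (Icc t0 t1) t :=
    (hu.differentiableOn (by norm_num) t htI).hasDerivWithinAt
  have hu'' {t : ℝ} (htI : t ∈ Icc t0 t1) : HasDerivWithinAt (derivWithin u (Icc t0 t1))
      (derivWithin (derivWithin u (Icc t0 t1)) (Icc t0 t1) t) (Icc t0 t1) t :=
    ((hu.derivWithin (uniqueDiffOn_Icc ht) (m := 1) (by norm_num)).differentiableOn
      one_ne_zero t htI).hasDerivWithinAt
  refine ⟨fun t => 3 * (∫ x in xmin..xmax, x ^ 2 * ψ t x) + xmin ^ 3 * u t,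
    fun t => 6 * (∫ x in xmin..xmax, x ^ 1 * ψ t x) + 3 * xmin ^ 2 * u t
      + xmin ^ 3 * derivWithin u (Icc t0 t1) t, fun t htI => ?_, fun t htI => ?_, fun t htI => ?_⟩
  · exact (hM 2 htI).congr_deriv (by norm_num)
  · refine (((hM 1 htI).const_mul 3).add ((hu' htI).const_mul (xmin ^ 3))).congr_deriv ?_
    norm_num
    ring
  · refine ((((hM 0 htI).const_mul 6).add ((hu' htI).const_mul (3 * xmin ^ 2))).add
      ((hu'' htI).const_mul (xmin ^ 3))).congr_deriv ?_
    norm_num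
    ring

/-- Third derivative identity for the third-moment output of the unit-speed transport
equation `∂ₜψ + ∂ₓψ = 0` with `ψ(t, xmax) = 0`:
`y'''(t) = 6 ∫ ψ(t,x) dx + 6 xmin u(t) + 3 xmin² u'(t) + xmin³ u''(t)`
where `u(t) = ψ(t, xmin)`. -/
theorem stmt7 (t0 t1 xmin xmax : ℝ) (ht : t0 < t1) (hx0 : 0 ≤ xmin) (hx : xmin < xmax)
    (ψ : ℝ → ℝ → ℝ) (u : ℝ → ℝ)
    (hC : ContDiffOn ℝ 3 (fun p : ℝ × ℝ => ψ p.1 p.2) (Set.Icc t0 t1 ×ˢ Set.Icc xmin xmax))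
    (hu : ContDiffOn ℝ 2 u (Set.Icc t0 t1))
    (hPDE : ∀ t ∈ Set.Icc t0 t1, ∀ x ∈ Set.Icc xmin xmax,
      derivWithin (fun s => ψ s x) (Set.Icc t0 t1) t
        + derivWithin (fun ξ => ψ t ξ) (Set.Icc xmin xmax) x = 0)
    (hbmin : ∀ t ∈ Set.Icc t0 t1, ψ t xmin = u t)
    (hbmax : ∀ t ∈ Set.Icc t0 t1, ψ t xmax = 0) :
    ∃ y1 y2 : ℝ → ℝ,
      (∀ t ∈ Set.Icc t0 t1,
        HasDerivWithinAt (fun s => ∫ x in xmin..xmax, x ^ 3 * ψ s x) (y1 t)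
          (Set.Icc t0 t1) t) ∧
      (∀ t ∈ Set.Icc t0 t1, HasDerivWithinAt y1 (y2 t) (Set.Icc t0 t1) t) ∧
      (∀ t ∈ Set.Icc t0 t1,
        HasDerivWithinAt y2
          ((6 * ∫ x in xmin..xmax, ψ t x) + 6 * xmin * u t
            + 3 * xmin ^ 2 * derivWithin u (Set.Icc t0 t1) t
            + xmin ^ 3 * derivWithin (derivWithin u (Set.Icc t0 t1)) (Set.Icc t0 t1) t)
          (Set.Icc t0 t1) t) :=
  stmt7_general t0 t1 xmin xmax ht hx ψ u hC hu hPDE hbmin hbmax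
end

section
/- Fix real numbers t0 < t1, 0 ≤ x_min < x_max, a continuous G : [t0,t1] → ℝ, and λ ∈ ℝ. Let ψ : [t0,t1] × [x_min,x_max] → ℝ be C¹ with ∂_t ψ(t,x) + G(t) ∂_x ψ(t,x) = 0 for all (t,x) and ψ(t, x_max) = 0 for all t. Let a : [t0,t1] × [x_min,x_max] → ℝ be C¹ with ∂_t a(t,x) + G(t) ∂_x a(t,x) = λ a(t,x) + x³ for all (t,x) and a(t, x_min) = 0 for all t. Set y(t) = ∫_{x_min}^{x_max} x³ ψ(t,x) dx, and let z : [t0,t1] → ℝ be differentiable with z′(t) = λ z(t) + y(t). Then for all t ∈ [t0,t1], ∫_{x_min}^{x_max} a(t,x) ψ(t,x) dx − z(t) = e^{λ (t − t0)} (∫_{x_min}^{x_max} a(t0,x) ψ(t0,x) dx − z(t0)). In particular, if additionally a(t0, x) = 0 for all x, then ∫_{x_min}^{x_max} a(t,x) ψ(t,x) dx − z(t) = −e^{λ(t−t0)} z(t0). -/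
/-!
Write `T(t) = ∫ a(t,x) ψ(t,x) dx`. Differentiating under the integral sign and substituting
both transport equations, the convective terms combine into `-G(t) ∂ₓ(a ψ)`, whose integral is
the boundary term `a ψ |_{xmin}^{xmax}`; it vanishes because `ψ(t, xmax) = 0` and
`a(t, xmin) = 0`. Hence `T' = λ T + y`, so the observer error `e = T - z` solves `e' = λ e` and
`e(t) = e^{λ (t - t0)} e(t0)`. On the closed rectangle, differentiation under the integral is
justified by the fundamental theorem of calculus in `t` for each `x`, Fubini, and the
fundamental theorem of calculus again.
-/

open Function MeasureTheory Set Interval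

section PartialDerivatives

variable {E : Type*} [NormedAddCommGroup E] [NormedSpace ℝ E] {f : ℝ → ℝ → E} {s u : Set ℝ}
  {t x : ℝ}

theorem HasFDerivWithinAt.hasDerivWithinAt_uncurry_left {L : ℝ × ℝ →L[ℝ] E}
    (hf : HasFDerivWithinAt (uncurry f) L (s ×ˢ u) (t, x)) (hx : x ∈ u) :
    HasDerivWithinAt (f · x) (L (1, 0)) s t := by
  have := hf.comp_hasDerivWithinAt t
    ((hasDerivWithinAt_id t s).prodMk (hasDerivWithinAt_const t s x)) fun _ hr => mk_mem_prod hr hx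
  exact this

theorem HasFDerivWithinAt.hasDerivWithinAt_uncurry_right {L : ℝ × ℝ →L[ℝ] E}
    (hf : HasFDerivWithinAt (uncurry f) L (s ×ˢ u) (t, x)) (ht : t ∈ s) :
    HasDerivWithinAt (f t) (L (0, 1)) u x := by
  have := hf.comp_hasDerivWithinAt x
    ((hasDerivWithinAt_const x u t).prodMk (hasDerivWithinAt_id x u)) fun _ hr => mk_mem_prod ht hr
  exact this

theorem DifferentiableOn.differentiableWithinAt_uncurry_left
    (hf : DifferentiableOn ℝ (uncurry f) (s ×ˢ u)) (ht : t ∈ s) (hx : x ∈ u) :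
    DifferentiableWithinAt ℝ (f · x) s t :=
  ((hf (t, x) ⟨ht, hx⟩).hasFDerivWithinAt.hasDerivWithinAt_uncurry_left hx).differentiableWithinAt

theorem DifferentiableOn.differentiableWithinAt_uncurry_right
    (hf : DifferentiableOn ℝ (uncurry f) (s ×ˢ u)) (ht : t ∈ s) (hx : x ∈ u) :
    DifferentiableWithinAt ℝ (f t) u x :=
  ((hf (t, x) ⟨ht, hx⟩).hasFDerivWithinAt.hasDerivWithinAt_uncurry_right ht).differentiableWithinAt

theorem ContDiffOn.continuousOn_derivWithin_uncurry_left
    (hf : ContDiffOn ℝ 1 (uncurry f) (s ×ˢ u)) (hs : UniqueDiffOn ℝ s) (hu : UniqueDiffOn ℝ u) :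
    ContinuousOn (uncurry fun t x => derivWithin (f · x) s t) (s ×ˢ u) := by
  refine ((ContinuousLinearMap.apply ℝ E ((1 : ℝ), (0 : ℝ))).continuous.comp_continuousOn
    (hf.continuousOn_fderivWithin (hs.prod hu) le_rfl)).congr fun p hp => ?_
  exact (((hf.differentiableOn one_ne_zero) p hp).hasFDerivWithinAt.hasDerivWithinAt_uncurry_left
    hp.2).derivWithin (hs p.1 hp.1)

theorem ContDiffOn.continuousOn_derivWithin_uncurry_right
    (hf : ContDiffOn ℝ 1 (uncurry f) (s ×ˢ u)) (hs : UniqueDiffOn ℝ s) (hu : UniqueDiffOn ℝ u) :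
    ContinuousOn (uncurry fun t x => derivWithin (f t) u x) (s ×ˢ u) := by
  refine ((ContinuousLinearMap.apply ℝ E ((0 : ℝ), (1 : ℝ))).continuous.comp_continuousOn
    (hf.continuousOn_fderivWithin (hs.prod hu) le_rfl)).congr fun p hp => ?_
  exact (((hf.differentiableOn one_ne_zero) p hp).hasFDerivWithinAt.hasDerivWithinAt_uncurry_right
    hp.1).derivWithin (hu p.2 hp.2)

end PartialDerivatives

section ParametricIntegrals

variable {E : Type*} [NormedAddCommGroup E] [NormedSpace ℝ E] {a b : ℝ}

theorem continuousOn_intervalIntegral_of_continuousOn_uncurry {X : Type*} [TopologicalSpace X]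
    [FirstCountableTopology X]
    {f : X → ℝ → E} {s : Set X} (hs : IsCompact s) (hab : a ≤ b)
    (hf : ContinuousOn (uncurry f) (s ×ˢ Icc a b)) :
    ContinuousOn (fun p => ∫ x in a..b, f p x) s := by
  obtain ⟨M, hM⟩ := (hs.prod isCompact_Icc).exists_bound_of_continuousOn hf
  have hIoc : Ι a b ⊆ Icc a b := by rw [uIoc_of_le hab]; exact Ioc_subset_Icc_self
  intro p hp
  apply intervalIntegral.continuousWithinAt_of_dominated_interval (bound := fun _ => M)
  · filter_upwards [self_mem_nhdsWithin] with q hq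
    exact ((hf.uncurry_left q hq).aestronglyMeasurable measurableSet_Icc).mono_set hIoc
  · filter_upwards [self_mem_nhdsWithin] with q hq
    exact ae_of_all _ fun x hx => hM (q, x) ⟨hq, hIoc hx⟩
  · exact intervalIntegrable_const
  · exact ae_of_all _ fun x hx => hf.uncurry_right x (hIoc hx) p hp

theorem intervalIntegral_intervalIntegral_swap_of_continuousOn [CompleteSpace E]
    {f : ℝ → ℝ → E} {c d : ℝ} (hab : a ≤ b) (hcd : c ≤ d)
    (hf : ContinuousOn (uncurry f) (Icc a b ×ˢ Icc c d)) :
    ∫ x in c..d, ∫ s in a..b, f s x = ∫ s in a..b, ∫ x in c..d, f s x := by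
  have hint : IntegrableOn (uncurry fun x s => f s x) (Ioc c d ×ˢ Ioc a b) := by
    refine ((hf.comp continuous_swap.continuousOn fun q hq => ⟨hq.2, hq.1⟩).integrableOn_compact
      (isCompact_Icc.prod isCompact_Icc)).mono_set ?_
    exact prod_mono Ioc_subset_Icc_self Ioc_subset_Icc_self
  simp_rw [intervalIntegral.integral_of_le hab, intervalIntegral.integral_of_le hcd]
  exact integral_integral_swap (by rwa [Measure.prod_restrict])

end ParametricIntegrals

section Leibniz

variable {E : Type*} [NormedAddCommGroup E] [NormedSpace ℝ E] [CompleteSpace E]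

theorem hasDerivWithinAt_intervalIntegral_of_hasDerivWithinAt {g g' : ℝ → ℝ → E}
    {t₀ t₁ a b t : ℝ} (hab : a ≤ b)
    (hg : ContinuousOn (uncurry g) (Icc t₀ t₁ ×ˢ Icc a b))
    (hg' : ContinuousOn (uncurry g') (Icc t₀ t₁ ×ˢ Icc a b))
    (hderiv : ∀ s ∈ Icc t₀ t₁, ∀ x ∈ Icc a b, HasDerivWithinAt (g · x) (g' s x) (Icc t₀ t₁) s)
    (ht : t ∈ Icc t₀ t₁) :
    HasDerivWithinAt (fun s => ∫ x in a..b, g s x) (∫ x in a..b, g' t x) (Icc t₀ t₁) t := by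
  have hslice : ∀ s ∈ Icc t₀ t₁, ∀ x ∈ Icc a b, ∫ r in t₀..s, g' r x = g s x - g t₀ x := by
    intro s hs x hx
    have hsub : Icc t₀ s ⊆ Icc t₀ t₁ := Icc_subset_Icc_right hs.2
    refine intervalIntegral.integral_eq_sub_of_hasDeriv_right_of_le hs.1
      ((hg.uncurry_right x hx).mono hsub) (fun r hr => ?_)
      (((hg'.uncurry_right x hx).mono hsub).intervalIntegrable_of_Icc hs.1)
    exact ((hderiv r (hsub (Ioo_subset_Icc_self hr)) x hx).hasDerivAt
      (Icc_mem_nhds hr.1 (hr.2.trans_le hs.2))).hasDerivWithinAt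
  have hrep : ∀ s ∈ Icc t₀ t₁,
      ∫ x in a..b, g s x = (∫ x in a..b, g t₀ x) + ∫ r in t₀..s, ∫ x in a..b, g' r x := by
    intro s hs
    have hsub : Icc t₀ s ⊆ Icc t₀ t₁ := Icc_subset_Icc_right hs.2
    have hint : ∀ r ∈ Icc t₀ t₁, IntervalIntegrable (g r) volume a b := fun r hr =>
      (hg.uncurry_left r hr).intervalIntegrable_of_Icc hab
    rw [← intervalIntegral_intervalIntegral_swap_of_continuousOn hs.1 hab
      (hg'.mono (prod_mono hsub subset_rfl)), intervalIntegral.integral_congr fun x hx =>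
      hslice s hs x (by rwa [uIcc_of_le hab] at hx), intervalIntegral.integral_sub (hint s hs)
      (hint t₀ (left_mem_Icc.2 (hs.1.trans hs.2))), add_sub_cancel]
  have hcont : ContinuousOn (fun r => ∫ x in a..b, g' r x) (Icc t₀ t₁) :=
    continuousOn_intervalIntegral_of_continuousOn_uncurry isCompact_Icc hab hg'
  have : Fact (t ∈ Icc t₀ t₁) := ⟨ht⟩
  refine (HasDerivWithinAt.const_add _ ?_).congr hrep (hrep t ht)
  exact intervalIntegral.integral_hasDerivWithinAt_right
    ((hcont.mono (Icc_subset_Icc_right ht.2)).intervalIntegrable_of_Icc ht.1)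
    (hcont.stronglyMeasurableAtFilter_nhdsWithin measurableSet_Icc t) (hcont t ht)

end Leibniz

theorem eq_exp_mul_of_hasDerivWithinAt_eq_mul {f : ℝ → ℝ} {l t₀ t₁ : ℝ}
    (hf : ∀ t ∈ Icc t₀ t₁, HasDerivWithinAt f (l * f t) (Icc t₀ t₁) t) :
    ∀ t ∈ Icc t₀ t₁, f t = Real.exp (l * (t - t₀)) * f t₀ := by
  have hcont : ContinuousOn (fun s => Real.exp (-(l * (s - t₀))) * f s) (Icc t₀ t₁) :=
    (Real.continuous_exp.comp_continuousOn (by fun_prop)).mul fun t ht =>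
      (hf t ht).continuousWithinAt
  have hderiv : ∀ t ∈ Ico t₀ t₁,
      HasDerivWithinAt (fun s => Real.exp (-(l * (s - t₀))) * f s) 0 (Ici t) t := by
    intro t ht
    have hexp := (((hasDerivAt_id t).sub_const t₀).const_mul l).neg.exp
    exact (hexp.hasDerivWithinAt.mul ((hf t (Ico_subset_Icc_self ht)).mono_of_mem_nhdsWithin
      (Icc_mem_nhdsGE_of_mem ht))).congr_deriv (by ring)
  intro t ht
  have hconst := constant_of_has_deriv_right_zero hcont hderiv t ht
  simp only [sub_self, mul_zero, neg_zero, Real.exp_zero, one_mul] at hconst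
  rw [← hconst, ← mul_assoc, ← Real.exp_add, add_neg_cancel, Real.exp_zero, one_mul]

theorem ContDiffOn.hasDerivWithinAt_intervalIntegral_mul {f g : ℝ → ℝ → ℝ}
    {t₀ t₁ a b t : ℝ} (htt : t₀ < t₁) (hab : a < b)
    (hf : ContDiffOn ℝ 1 (uncurry f) (Icc t₀ t₁ ×ˢ Icc a b))
    (hg : ContDiffOn ℝ 1 (uncurry g) (Icc t₀ t₁ ×ˢ Icc a b)) (ht : t ∈ Icc t₀ t₁) :
    HasDerivWithinAt (fun s => ∫ x in a..b, f s x * g s x)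
      (∫ x in a..b, derivWithin (f · x) (Icc t₀ t₁) t * g t x
        + f t x * derivWithin (g · x) (Icc t₀ t₁) t) (Icc t₀ t₁) t := by
  have hI := uniqueDiffOn_Icc htt
  have hJ := uniqueDiffOn_Icc hab
  refine hasDerivWithinAt_intervalIntegral_of_hasDerivWithinAt
    (g := fun s x => f s x * g s x) (g' := fun s x => derivWithin (f · x) (Icc t₀ t₁) s * g s x
      + f s x * derivWithin (g · x) (Icc t₀ t₁) s) hab.le (hf.continuousOn.mul hg.continuousOn)
    (((hf.continuousOn_derivWithin_uncurry_left hI hJ).mul hg.continuousOn).add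
      (hf.continuousOn.mul (hg.continuousOn_derivWithin_uncurry_left hI hJ)))
    (fun s hs x hx => ?_) ht
  exact ((hf.differentiableOn one_ne_zero).differentiableWithinAt_uncurry_left hs
    hx).hasDerivWithinAt.mul
      ((hg.differentiableOn one_ne_zero).differentiableWithinAt_uncurry_left hs hx).hasDerivWithinAt

theorem integral_derivWithin_mul_eq_of_transport {t₀ t₁ xmin xmax l t : ℝ} {G : ℝ → ℝ}
    {ψ a : ℝ → ℝ → ℝ} (htt : t₀ < t₁) (hx : xmin < xmax)
    (hCψ : ContDiffOn ℝ 1 (uncurry ψ) (Icc t₀ t₁ ×ˢ Icc xmin xmax))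
    (hCa : ContDiffOn ℝ 1 (uncurry a) (Icc t₀ t₁ ×ˢ Icc xmin xmax))
    (hPDEψ : ∀ x ∈ Icc xmin xmax, derivWithin (ψ · x) (Icc t₀ t₁) t
      + G t * derivWithin (ψ t) (Icc xmin xmax) x = 0)
    (hPDEa : ∀ x ∈ Icc xmin xmax, derivWithin (a · x) (Icc t₀ t₁) t
      + G t * derivWithin (a t) (Icc xmin xmax) x = l * a t x + x ^ 3)
    (hbψ : ψ t xmax = 0) (hba : a t xmin = 0) (ht : t ∈ Icc t₀ t₁) :
    ∫ x in xmin..xmax, derivWithin (a · x) (Icc t₀ t₁) t * ψ t x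
        + a t x * derivWithin (ψ · x) (Icc t₀ t₁) t
      = l * (∫ x in xmin..xmax, a t x * ψ t x) + ∫ x in xmin..xmax, x ^ 3 * ψ t x := by
  have hI := uniqueDiffOn_Icc htt
  have hJ := uniqueDiffOn_Icc hx
  have hint {g : ℝ → ℝ} (hg : ContinuousOn g (Icc xmin xmax)) :
      IntervalIntegrable g volume xmin xmax := hg.intervalIntegrable_of_Icc hx.le
  have hψ := hCψ.continuousOn.uncurry_left t ht
  have ha := hCa.continuousOn.uncurry_left t ht
  have hψ' := (hCψ.continuousOn_derivWithin_uncurry_right hI hJ).uncurry_left t ht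
  have ha' := (hCa.continuousOn_derivWithin_uncurry_right hI hJ).uncurry_left t ht
  have hflux : ∫ x in xmin..xmax, derivWithin (a t) (Icc xmin xmax) x * ψ t x
      + a t x * derivWithin (ψ t) (Icc xmin xmax) x = 0 := by
    rw [intervalIntegral.integral_deriv_mul_eq_sub_of_hasDerivWithinAt _ _ (hint ha') (hint hψ'),
      hbψ, hba, zero_mul, mul_zero, sub_zero]
    all_goals
      rw [uIcc_of_le hx.le]
      intro x hxI
    · exact ((hCa.differentiableOn one_ne_zero).differentiableWithinAt_uncurry_right ht
        hxI).hasDerivWithinAt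
    · exact ((hCψ.differentiableOn one_ne_zero).differentiableWithinAt_uncurry_right ht
        hxI).hasDerivWithinAt
  calc _ = ∫ x in xmin..xmax, l * (a t x * ψ t x) + x ^ 3 * ψ t x
        - G t * (derivWithin (a t) (Icc xmin xmax) x * ψ t x
          + a t x * derivWithin (ψ t) (Icc xmin xmax) x) := by
        refine intervalIntegral.integral_congr fun x hxI => ?_
        rw [uIcc_of_le hx.le] at hxI
        linear_combination ψ t x * hPDEa x hxI + a t x * hPDEψ x hxI
    _ = _ := by
      rw [intervalIntegral.integral_sub, intervalIntegral.integral_add,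
        intervalIntegral.integral_const_mul, intervalIntegral.integral_const_mul, hflux, mul_zero,
        sub_zero]
      all_goals exact hint (by fun_prop)

theorem stmt13_general (t0 t1 xmin xmax l : ℝ) (ht : t0 < t1) (hx : xmin < xmax)
    (G : ℝ → ℝ)
    (ψ a : ℝ → ℝ → ℝ) (z : ℝ → ℝ)
    (hCψ : ContDiffOn ℝ 1 (fun p : ℝ × ℝ => ψ p.1 p.2) (Set.Icc t0 t1 ×ˢ Set.Icc xmin xmax))
    (hCa : ContDiffOn ℝ 1 (fun p : ℝ × ℝ => a p.1 p.2) (Set.Icc t0 t1 ×ˢ Set.Icc xmin xmax))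
    (hPDEψ : ∀ t ∈ Set.Icc t0 t1, ∀ x ∈ Set.Icc xmin xmax,
      derivWithin (fun s => ψ s x) (Set.Icc t0 t1) t
        + G t * derivWithin (fun ξ => ψ t ξ) (Set.Icc xmin xmax) x = 0)
    (hPDEa : ∀ t ∈ Set.Icc t0 t1, ∀ x ∈ Set.Icc xmin xmax,
      derivWithin (fun s => a s x) (Set.Icc t0 t1) t
        + G t * derivWithin (fun ξ => a t ξ) (Set.Icc xmin xmax) x
        = l * a t x + x ^ 3)
    (hbψ : ∀ t ∈ Set.Icc t0 t1, ψ t xmax = 0)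
    (hba : ∀ t ∈ Set.Icc t0 t1, a t xmin = 0)
    (hz : ∀ t ∈ Set.Icc t0 t1,
      HasDerivWithinAt z (l * z t + ∫ x in xmin..xmax, x ^ 3 * ψ t x) (Set.Icc t0 t1) t) :
    (∀ t ∈ Set.Icc t0 t1,
      (∫ x in xmin..xmax, a t x * ψ t x) - z t
        = Real.exp (l * (t - t0)) * ((∫ x in xmin..xmax, a t0 x * ψ t0 x) - z t0)) ∧
    ((∀ x ∈ Set.Icc xmin xmax, a t0 x = 0) →
      ∀ t ∈ Set.Icc t0 t1,
        (∫ x in xmin..xmax, a t x * ψ t x) - z t = - Real.exp (l * (t - t0)) * z t0) := by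
  have herror : ∀ t ∈ Icc t0 t1,
      HasDerivWithinAt (fun s => (∫ x in xmin..xmax, a s x * ψ s x) - z s)
        (l * ((∫ x in xmin..xmax, a t x * ψ t x) - z t)) (Icc t0 t1) t := by
    intro t htI
    have hF := hCa.hasDerivWithinAt_intervalIntegral_mul ht hx hCψ htI
    rw [integral_derivWithin_mul_eq_of_transport ht hx hCψ hCa (hPDEψ t htI) (hPDEa t htI)
      (hbψ t htI) (hba t htI) htI] at hF
    exact (hF.sub (hz t htI)).congr_deriv (by ring)
  have hsol := eq_exp_mul_of_hasDerivWithinAt_eq_mul herror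
  refine ⟨hsol, fun ha0 t htI => ?_⟩
  have hF0 : ∫ x in xmin..xmax, a t0 x * ψ t0 x = 0 := by
    rw [intervalIntegral.integral_congr (g := fun _ => 0) fun x hxI => ?_,
      intervalIntegral.integral_zero]
    rw [uIcc_of_le hx.le] at hxI
    simp [ha0 x hxI]
  rw [hsol t htI, hF0]
  ring

/-- Kazantzis–Kravaris/Luenberger observer for the crystallization transport equation: if `ψ`
solves `∂ₜψ + G(t) ∂ₓψ = 0` with `ψ(t, xmax) = 0`, `a` solves
`∂ₜa + G(t) ∂ₓa = l a + x³` with `a(t, xmin) = 0`, and `z' = l z + y` with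
`y(t) = ∫ x³ ψ(t,x) dx`, then the observer error `∫ a(t,x) ψ(t,x) dx − z(t)` decays as
`exp (l (t − t0))` times its initial value; in particular if `a(t0,·) = 0` it equals
`−exp (l (t − t0)) z(t0)`. -/
theorem stmt13 (t0 t1 xmin xmax l : ℝ) (ht : t0 < t1) (hx0 : 0 ≤ xmin) (hx : xmin < xmax)
    (G : ℝ → ℝ) (hGcont : ContinuousOn G (Set.Icc t0 t1))
    (ψ a : ℝ → ℝ → ℝ) (z : ℝ → ℝ)
    (hCψ : ContDiffOn ℝ 1 (fun p : ℝ × ℝ => ψ p.1 p.2) (Set.Icc t0 t1 ×ˢ Set.Icc xmin xmax))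
    (hCa : ContDiffOn ℝ 1 (fun p : ℝ × ℝ => a p.1 p.2) (Set.Icc t0 t1 ×ˢ Set.Icc xmin xmax))
    (hPDEψ : ∀ t ∈ Set.Icc t0 t1, ∀ x ∈ Set.Icc xmin xmax,
      derivWithin (fun s => ψ s x) (Set.Icc t0 t1) t
        + G t * derivWithin (fun ξ => ψ t ξ) (Set.Icc xmin xmax) x = 0)
    (hPDEa : ∀ t ∈ Set.Icc t0 t1, ∀ x ∈ Set.Icc xmin xmax,
      derivWithin (fun s => a s x) (Set.Icc t0 t1) t
        + G t * derivWithin (fun ξ => a t ξ) (Set.Icc xmin xmax) x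
        = l * a t x + x ^ 3)
    (hbψ : ∀ t ∈ Set.Icc t0 t1, ψ t xmax = 0)
    (hba : ∀ t ∈ Set.Icc t0 t1, a t xmin = 0)
    (hz : ∀ t ∈ Set.Icc t0 t1,
      HasDerivWithinAt z (l * z t + ∫ x in xmin..xmax, x ^ 3 * ψ t x) (Set.Icc t0 t1) t) :
    (∀ t ∈ Set.Icc t0 t1,
      (∫ x in xmin..xmax, a t x * ψ t x) - z t
        = Real.exp (l * (t - t0)) * ((∫ x in xmin..xmax, a t0 x * ψ t0 x) - z t0)) ∧
    ((∀ x ∈ Set.Icc xmin xmax, a t0 x = 0) →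
      ∀ t ∈ Set.Icc t0 t1,
        (∫ x in xmin..xmax, a t x * ψ t x) - z t = - Real.exp (l * (t - t0)) * z t0) :=
  stmt13_general t0 t1 xmin xmax l ht hx G ψ a z hCψ hCa hPDEψ hPDEa hbψ hba hz
end
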